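/- arXiv:2212.06080 — 8 statements merged into one kernel-verified Lean document; each statement's English description precedes it below -/
import Mathlib

section
/- Let m : [0,∞) → ℝ be a continuous, weakly increasing function with m(y)/log(y) → 1 as y → ∞. Let (Y(1),Y(0)) have joint distribution P on [0,∞)² with neither marginal degenerate at zero, suppose P(Y(1)=0) ≠ P(Y(0)=0), and suppose E[|log Y(d)| | Y(d)>0] < ∞ for d=0,1. Define θ(a) = E_P[m(aY(1)) − m(aY(0))] for a ≥ 0. Then θ is continuous on [0,∞), θ(a) → 0 as a → 0, |θ(a)| → ∞ as a → ∞, and consequently for every θ* ∈ (0,∞) there exists a > 0 with |θ(a)| = θ*. -/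
/-!
Monotonicity together with `m(y) ~ log y` bounds `|m(y)|` by `C + 2|log y|`, so the
integrability of `log Y(d)` on `{Y(d) > 0}` dominates the integrands `m(aY(d))` locally
uniformly in `a`: `θ` is continuous and `θ(0) = 0`. After division by `log a` the integrands
tend pointwise to the indicator of `{Y(d) > 0}` (for `Y(d) > 0`, `log(aY(d)) ~ log a`), so
`θ(a) / log a` tends to `P(Y(1) > 0) - P(Y(0) > 0)`, which is nonzero exactly because the
treatment moves the mass at zero. Hence `|θ(a)| → ∞`, and the intermediate value theorem on
`[0, b]` reaches every level.
-/

open MeasureTheory Filter Set Asymptotics Real Topology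

lemma Real.abs_log_mul_le (x y : ℝ) : |log (x * y)| ≤ |log x| + |log y| := by
  rcases eq_or_ne x 0 with rfl | hx
  · simp
  rcases eq_or_ne y 0 with rfl | hy
  · simp
  rw [log_mul hx hy]
  exact abs_add_le _ _

lemma exists_continuous_monotone_eqOn_Ici {m : ℝ → ℝ} (hc : ContinuousOn m (Ici 0))
    (hm : MonotoneOn m (Ici 0)) :
    ∃ M : ℝ → ℝ, Continuous M ∧ Monotone M ∧ EqOn M m (Ici 0) :=
  ⟨fun y => m (max y 0),
    hc.comp_continuous (continuous_id.max continuous_const) fun y => le_max_right y 0,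
    fun _ _ h => hm (mem_Ici.2 (le_max_right _ _)) (mem_Ici.2 (le_max_right _ _))
      (max_le_max_right 0 h),
    fun y hy => by simp only [max_eq_left (show (0 : ℝ) ≤ y from hy)]⟩

section LogLike

variable {M : ℝ → ℝ}

lemma exists_abs_le_const_add_two_mul_abs_log (hM : Monotone M)
    (hlim : Tendsto (fun y => M y / log y) atTop (𝓝 1)) :
    ∃ C, ∀ y, 0 ≤ y → |M y| ≤ C + 2 * |log y| := by
  obtain ⟨N, hN⟩ := eventually_atTop.mp <|
    (hlim.abs.eventually (eventually_lt_nhds (abs_one.trans_lt one_lt_two))).and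
      (tendsto_log_atTop.eventually_gt_atTop 0)
  refine ⟨max |M 0| |M N|, fun y hy => ?_⟩
  rcases le_total y N with hyN | hNy
  · have := abs_le_max_abs_abs (hM hy) (hM hyN)
    linarith [abs_nonneg (log y)]
  · obtain ⟨hratio, hlog⟩ := hN y hNy
    rw [abs_div, abs_of_pos hlog, div_lt_iff₀ hlog] at hratio
    linarith [le_max_left |M 0| |M N|, abs_nonneg (M 0), abs_of_pos hlog]

lemma tendsto_comp_mul_div_log (hlim : Tendsto (fun y => M y / log y) atTop (𝓝 1))
    {t : ℝ} (ht : 0 < t) : Tendsto (fun a => M (a * t) / log a) atTop (𝓝 1) := by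
  have hM : (fun a => M (a * t)) ~[atTop] fun a => log (a * t) :=
    (isEquivalent_of_tendsto_one hlim).comp_tendsto (tendsto_id.atTop_mul_const ht)
  have hlog : (fun a => log (a * t)) ~[atTop] log := by
    refine (IsEquivalent.refl.add_isLittleO (isLittleO_const_log_atTop (c := log t))).congr_left ?_
    filter_upwards [eventually_gt_atTop 0] with a ha
    exact (log_mul ha.ne' ht.ne').symm
  exact (isEquivalent_iff_tendsto_one <| (tendsto_log_atTop.eventually_gt_atTop 0).mono
    fun _ h => h.ne').mp (hM.trans hlog)

end LogLike

section Integral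

variable {Ω : Type*} [MeasurableSpace Ω] {μ : Measure Ω} {Y : Ω → ℝ} {M : ℝ → ℝ}

lemma integrable_log_of_integrableOn_pos (hY : ∀ ω, 0 ≤ Y ω)
    (h : IntegrableOn (fun ω => log (Y ω)) {ω | 0 < Y ω} μ) :
    Integrable (fun ω => log (Y ω)) μ := by
  refine (integrableOn_iff_integrable_of_support_subset fun ω hω => ?_).mp h
  exact (hY ω).lt_of_ne fun h0 => hω (by simp [← h0])

lemma measureReal_pos_eq_one_sub [IsProbabilityMeasure μ] (hYm : Measurable Y)
    (hY : ∀ ω, 0 ≤ Y ω) : μ.real {ω | 0 < Y ω} = 1 - μ.real {ω | Y ω = 0} := by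
  have : {ω | 0 < Y ω} = {ω | Y ω = 0}ᶜ := by
    ext ω
    simp [(hY ω).lt_iff_ne, eq_comm]
  rw [this, measureReal_compl (s := {ω | Y ω = 0}) (hYm (measurableSet_singleton 0)),
    probReal_univ]

variable [IsFiniteMeasure μ]

lemma integrable_comp_const_mul (hMc : Continuous M) {C : ℝ}
    (hC : ∀ y, 0 ≤ y → |M y| ≤ C + 2 * |log y|) (hYm : Measurable Y)
    (hY : ∀ ω, 0 ≤ Y ω) (hlogY : Integrable (fun ω => log (Y ω)) μ) {c : ℝ}
    (hc : 0 ≤ c) :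
    Integrable (fun ω => M (c * Y ω)) μ := by
  refine ((integrable_const (C + 2 * |log c|)).add (hlogY.abs.const_mul 2)).mono'
    (hMc.measurable.comp (hYm.const_mul c)).aestronglyMeasurable (ae_of_all _ fun ω => ?_)
  have := hC _ (mul_nonneg hc (hY ω))
  have := abs_log_mul_le c (Y ω)
  simp only [Real.norm_eq_abs, Pi.add_apply]
  linarith

lemma continuousOn_integral_comp_mul (hMc : Continuous M) (hM : Monotone M)
    (hYm : Measurable Y) (hY : ∀ ω, 0 ≤ Y ω)
    (hint : ∀ c, 0 ≤ c → Integrable (fun ω => M (c * Y ω)) μ) :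
    ContinuousOn (fun a => ∫ ω, M (a * Y ω) ∂μ) (Ici 0) := by
  intro a₀ ha₀
  have hnear : ∀ᶠ a in 𝓝[Ici 0] a₀, a ∈ Icc 0 (a₀ + 1) := by
    filter_upwards [self_mem_nhdsWithin,
      nhdsWithin_le_nhds (eventually_lt_nhds (lt_add_one a₀))] with a h0 h1 using ⟨h0, h1.le⟩
  refine continuousWithinAt_of_dominated (bound := fun ω => |M 0| + |M ((a₀ + 1) * Y ω)|)
    (Eventually.of_forall fun a =>
      (hMc.measurable.comp (hYm.const_mul a)).aestronglyMeasurable) ?_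
    ((integrable_const _).add (hint _ (by linarith [mem_Ici.mp ha₀])).abs)
    (ae_of_all _ fun ω => (hMc.comp (continuous_mul_const (Y ω))).continuousWithinAt)
  filter_upwards [hnear] with a ha
  refine ae_of_all _ fun ω => (abs_le_max_abs_abs (hM (mul_nonneg ha.1 (hY ω)))
    (hM (mul_le_mul_of_nonneg_right ha.2 (hY ω)))).trans ?_
  exact max_le_add_of_nonneg (abs_nonneg _) (abs_nonneg _)

lemma tendsto_integral_comp_mul_div_log (hMc : Continuous M) {C : ℝ}
    (hC : ∀ y, 0 ≤ y → |M y| ≤ C + 2 * |log y|)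
    (hlim : Tendsto (fun y => M y / log y) atTop (𝓝 1)) (hYm : Measurable Y)
    (hY : ∀ ω, 0 ≤ Y ω) (hlogY : Integrable (fun ω => log (Y ω)) μ) :
    Tendsto (fun a => (∫ ω, M (a * Y ω) ∂μ) / log a) atTop
      (𝓝 (μ.real {ω | 0 < Y ω})) := by
  have hs : MeasurableSet {ω | 0 < Y ω} := measurableSet_lt measurable_const hYm
  simp_rw [← integral_div, ← integral_indicator_one hs]
  refine tendsto_integral_filter_of_dominated_convergence
    (fun ω => |C| + 2 + 2 * |log (Y ω)|)
    (Eventually.of_forall fun a =>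
      ((hMc.measurable.comp (hYm.const_mul a)).div_const _).aestronglyMeasurable) ?_
    ((integrable_const _).add (hlogY.abs.const_mul 2)) (ae_of_all _ fun ω => ?_)
  · -- for `log a ≥ 1`, `|M (a y)| ≤ C + 2 log a + 2 |log y| ≤ (|C| + 2 + 2 |log y|) log a`
    filter_upwards [tendsto_log_atTop.eventually_ge_atTop 1, eventually_ge_atTop 0]
      with a hlog ha
    refine ae_of_all _ fun ω => ?_
    have hlog_pos : 0 < log a := one_pos.trans_le hlog
    rw [Real.norm_eq_abs, abs_div, abs_of_pos hlog_pos, div_le_iff₀ hlog_pos]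
    have hM := hC _ (mul_nonneg ha (hY ω))
    have hmul := abs_log_mul_le a (Y ω)
    rw [abs_of_pos hlog_pos] at hmul
    have hC_le := mul_le_mul_of_nonneg_left hlog (abs_nonneg C)
    have hY_le := mul_le_mul_of_nonneg_left hlog (abs_nonneg (log (Y ω)))
    nlinarith [le_abs_self C]
  · rcases (hY ω).lt_or_eq with hpos | hzero
    · simpa [indicator_of_mem (show ω ∈ {ω | 0 < Y ω} from hpos)]
        using tendsto_comp_mul_div_log hlim hpos
    · simpa [← hzero] using tendsto_const_nhds.div_atTop tendsto_log_atTop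

end Integral

lemma tendsto_abs_atTop_of_tendsto_div_log {f : ℝ → ℝ} {c : ℝ} (hc : c ≠ 0)
    (hf : Tendsto (fun a => f a / log a) atTop (𝓝 c)) :
    Tendsto (fun a => |f a|) atTop atTop := by
  refine (hf.abs.pos_mul_atTop (abs_pos.mpr hc) tendsto_log_atTop).congr' ?_
  filter_upwards [eventually_gt_atTop 1] with a ha
  rw [abs_div, abs_of_pos (log_pos ha), div_mul_cancel₀ _ (log_pos ha).ne']

lemma exists_pos_abs_eq_of_tendsto_abs_atTop {f : ℝ → ℝ} (hf : ContinuousOn f (Ici 0))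
    (h0 : f 0 = 0) (hinf : Tendsto (fun a => |f a|) atTop atTop) {t : ℝ} (ht : 0 < t) :
    ∃ a, 0 < a ∧ |f a| = t := by
  obtain ⟨b, hbt, hb⟩ := ((hinf.eventually_ge_atTop t).and (eventually_ge_atTop 0)).exists
  obtain ⟨a, ha, hfa⟩ := intermediate_value_Icc hb ((hf.mono Icc_subset_Ici_self).abs)
    ⟨by simpa [h0] using ht.le, hbt⟩
  refine ⟨a, ha.1.lt_of_ne ?_, hfa⟩
  rintro rfl
  simp [h0, ht.ne] at hfa

theorem stmt_0_general
    {Ω : Type*} [MeasurableSpace Ω] (μ : Measure Ω) [IsProbabilityMeasure μ]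
    (Y1 Y0 : Ω → ℝ) (hY1meas : Measurable Y1) (hY0meas : Measurable Y0)
    (hY1nonneg : ∀ ω, 0 ≤ Y1 ω) (hY0nonneg : ∀ ω, 0 ≤ Y0 ω)
    (m : ℝ → ℝ)
    (hm_cont : ContinuousOn m (Ici 0))
    (hm_mono : MonotoneOn m (Ici 0))
    (hm_loglike : Tendsto (fun y => m y / Real.log y) atTop (nhds 1))
    -- treatment affects the extensive margin
    (hext : μ {ω | Y1 ω = 0} ≠ μ {ω | Y0 ω = 0})
    -- E[|log Y(d)| ∣ Y(d) > 0] < ∞ for d = 0,1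
    (hint1 : IntegrableOn (fun ω => Real.log (Y1 ω)) {ω | 0 < Y1 ω} μ)
    (hint0 : IntegrableOn (fun ω => Real.log (Y0 ω)) {ω | 0 < Y0 ω} μ)
    (θ : ℝ → ℝ)
    (hθ : ∀ a, θ a = ∫ ω, (m (a * Y1 ω) - m (a * Y0 ω)) ∂μ) :
    ContinuousOn θ (Ici 0) ∧
    Tendsto θ (nhdsWithin 0 (Ici 0)) (nhds 0) ∧
    Tendsto (fun a => |θ a|) atTop atTop ∧
    ∀ θstar : ℝ, 0 < θstar → ∃ a : ℝ, 0 < a ∧ |θ a| = θstar := by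
  obtain ⟨M, hMc, hMmono, hMm⟩ := exists_continuous_monotone_eqOn_Ici hm_cont hm_mono
  have hMlog : Tendsto (fun y => M y / Real.log y) atTop (nhds 1) :=
    hm_loglike.congr' ((eventually_ge_atTop 0).mono fun y hy => by simp only [hMm hy])
  obtain ⟨C, hC⟩ := exists_abs_le_const_add_two_mul_abs_log hMmono hMlog
  have hlog1 := integrable_log_of_integrableOn_pos hY1nonneg hint1
  have hlog0 := integrable_log_of_integrableOn_pos hY0nonneg hint0
  have hI1 : ∀ c, 0 ≤ c → Integrable (fun ω => M (c * Y1 ω)) μ :=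
    fun _ => integrable_comp_const_mul hMc hC hY1meas hY1nonneg hlog1
  have hI0 : ∀ c, 0 ≤ c → Integrable (fun ω => M (c * Y0 ω)) μ :=
    fun _ => integrable_comp_const_mul hMc hC hY0meas hY0nonneg hlog0
  have hθM :
      EqOn θ (fun a => ∫ ω, M (a * Y1 ω) ∂μ - ∫ ω, M (a * Y0 ω) ∂μ) (Ici 0) := by
    intro a ha
    dsimp only
    rw [hθ, ← integral_sub (hI1 a ha) (hI0 a ha)]
    congr with ω
    rw [hMm (mul_nonneg ha (hY1nonneg ω)), hMm (mul_nonneg ha (hY0nonneg ω))]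
  have hcont : ContinuousOn θ (Ici 0) :=
    ((continuousOn_integral_comp_mul hMc hMmono hY1meas hY1nonneg hI1).sub
      (continuousOn_integral_comp_mul hMc hMmono hY0meas hY0nonneg hI0)).congr hθM
  have hθ0 : θ 0 = 0 := by simp [hθ]
  have hasymp : Tendsto (fun a => θ a / Real.log a) atTop
      (nhds (μ.real {ω | 0 < Y1 ω} - μ.real {ω | 0 < Y0 ω})) :=
    ((tendsto_integral_comp_mul_div_log hMc hC hMlog hY1meas hY1nonneg hlog1).sub
      (tendsto_integral_comp_mul_div_log hMc hC hMlog hY0meas hY0nonneg hlog0)).congr'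
      ((eventually_ge_atTop 0).mono fun a ha => by simp only [hθM ha, sub_div])
  have hΔ : μ.real {ω | 0 < Y1 ω} - μ.real {ω | 0 < Y0 ω} ≠ 0 := by
    rw [measureReal_pos_eq_one_sub hY1meas hY1nonneg,
      measureReal_pos_eq_one_sub hY0meas hY0nonneg, sub_ne_zero, Ne, sub_right_inj,
      measureReal_eq_measureReal_iff]
    exact hext
  have hinf := tendsto_abs_atTop_of_tendsto_div_log hΔ hasymp
  exact ⟨hcont, by simpa only [hθ0] using (hcont 0 self_mem_Ici).tendsto, hinf,
    fun _ ht => exists_pos_abs_eq_of_tendsto_abs_atTop hcont hθ0 hinf ht⟩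

/-- Chen–Roth, Proposition 1: for a log-like transformation `m`
(continuous, weakly increasing, `m(y)/log y → 1`), if the treatment affects the
extensive margin, then the rescaled ATE `θ(a) = E[m(aY(1)) - m(aY(0))]` is continuous,
tends to 0 as `a → 0`, has `|θ(a)| → ∞` as `a → ∞`, and hence attains every
magnitude `θ* ∈ (0,∞)`. -/
theorem stmt_0
    {Ω : Type*} [MeasurableSpace Ω] (μ : Measure Ω) [IsProbabilityMeasure μ]
    (Y1 Y0 : Ω → ℝ) (hY1meas : Measurable Y1) (hY0meas : Measurable Y0)
    (hY1nonneg : ∀ ω, 0 ≤ Y1 ω) (hY0nonneg : ∀ ω, 0 ≤ Y0 ω)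
    (m : ℝ → ℝ)
    (hm_cont : ContinuousOn m (Ici 0))
    (hm_mono : MonotoneOn m (Ici 0))
    (hm_loglike : Tendsto (fun y => m y / Real.log y) atTop (nhds 1))
    -- neither marginal is degenerate at zero
    (hnondeg1 : μ {ω | Y1 ω = 0} < 1)
    (hnondeg0 : μ {ω | Y0 ω = 0} < 1)
    -- treatment affects the extensive margin
    (hext : μ {ω | Y1 ω = 0} ≠ μ {ω | Y0 ω = 0})
    -- E[|log Y(d)| ∣ Y(d) > 0] < ∞ for d = 0,1
    (hint1 : IntegrableOn (fun ω => Real.log (Y1 ω)) {ω | 0 < Y1 ω} μ)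
    (hint0 : IntegrableOn (fun ω => Real.log (Y0 ω)) {ω | 0 < Y0 ω} μ)
    (θ : ℝ → ℝ)
    (hθ : ∀ a, θ a = ∫ ω, (m (a * Y1 ω) - m (a * Y0 ω)) ∂μ) :
    ContinuousOn θ (Ici 0) ∧
    Tendsto θ (nhdsWithin 0 (Ici 0)) (nhds 0) ∧
    Tendsto (fun a => |θ a|) atTop atTop ∧
    ∀ θstar : ℝ, 0 < θstar → ∃ a : ℝ, 0 < a ∧ |θ a| = θstar :=
  stmt_0_general μ Y1 Y0 hY1meas hY0meas hY1nonneg hY0nonneg m hm_cont hm_mono hm_loglike hext hint1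
    hint0 θ hθ
end

section
/- Let m : [0,∞) → ℝ be a continuous, weakly increasing function with m(y)/log(y) → 1 as y → ∞. Let (Y(1),Y(0)) have joint distribution P on [0,∞)² with E[|log Y(d)| | Y(d)>0] < ∞ for d=0,1. Then the map a ↦ E_P[m(aY(1)) − m(aY(0))] is continuous on [0,∞). -/
open MeasureTheory Filter Set Topology

/-- A growth bound for a log-like function: on any `a ∈ [0, A]` (with `A ≥ 1`) and `y ≥ 0`,
`|m (a*y)| ≤ C + 2 |log y|`. -/
private lemma loglike_bound (m : ℝ → ℝ)
    (hm_mono : MonotoneOn m (Ici 0))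
    (hm_loglike : Tendsto (fun y => m y / Real.log y) atTop (nhds 1)) :
    ∀ A : ℝ, 1 ≤ A → ∃ C : ℝ, ∀ a ∈ Icc (0:ℝ) A, ∀ y : ℝ, 0 ≤ y →
      |m (a * y)| ≤ C + 2 * |Real.log y| := by
  have h2 : ∀ᶠ y in atTop, m y / Real.log y < 2 :=
    hm_loglike.eventually (eventually_lt_nhds (by norm_num : (1:ℝ) < 2))
  obtain ⟨y₀, hy₀⟩ := eventually_atTop.mp h2
  set y₁ : ℝ := max y₀ 2 with hy₁def
  have hy₁_ge : ∀ y : ℝ, y₁ ≤ y → m y < 2 * Real.log y := by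
    intro y hy
    have h1 : (1:ℝ) < y := lt_of_lt_of_le (by norm_num) (le_trans (le_max_right _ _) hy)
    have hlog : 0 < Real.log y := Real.log_pos h1
    have := hy₀ y (le_trans (le_max_left _ _) hy)
    calc m y = (m y / Real.log y) * Real.log y := by field_simp
      _ < 2 * Real.log y := by exact mul_lt_mul_of_pos_right this hlog
  have hy₁pos : (0:ℝ) < y₁ := lt_of_lt_of_le (by norm_num) (le_max_right _ _)
  intro A hA
  refine ⟨|m 0| + |m y₁| + 2 * Real.log A, ?_⟩
  intro a ha y hy
  have hay : 0 ≤ a * y := mul_nonneg ha.1 hy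
  have hlogA : 0 ≤ Real.log A := Real.log_nonneg hA
  have hm0 : m 0 ≤ m (a * y) := hm_mono (mem_Ici.mpr le_rfl) (mem_Ici.mpr hay) hay
  rw [abs_le]
  constructor
  · have : -|m 0| ≤ m 0 := neg_abs_le _
    have habs : 0 ≤ |m y₁| := abs_nonneg _
    have habsl : 0 ≤ |Real.log y| := abs_nonneg _
    linarith
  · rcases le_or_gt (a * y) y₁ with h | h
    · have : m (a * y) ≤ m y₁ := hm_mono (mem_Ici.mpr hay) (mem_Ici.mpr hy₁pos.le) h
      have h1 : m y₁ ≤ |m y₁| := le_abs_self _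
      have habs0 : 0 ≤ |m 0| := abs_nonneg _
      have habsl : 0 ≤ |Real.log y| := abs_nonneg _
      linarith
    · have hy_pos : 0 < y := by
        rcases hy.lt_or_eq with h' | h'
        · exact h'
        · exfalso; rw [← h', mul_zero] at h; linarith
      have ha_pos : 0 < a := by
        rcases ha.1.lt_or_eq with h' | h'
        · exact h'
        · exfalso; rw [← h', zero_mul] at h; linarith
      have hm := hy₁_ge (a * y) h.le
      have hsplit : Real.log (a * y) = Real.log a + Real.log y :=
        Real.log_mul (ne_of_gt ha_pos) (ne_of_gt hy_pos)
      have hlogaA : Real.log a ≤ Real.log A := Real.log_le_log ha_pos ha.2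
      have hly : Real.log y ≤ |Real.log y| := le_abs_self _
      have habs0 : 0 ≤ |m 0| := abs_nonneg _
      have habs1 : 0 ≤ |m y₁| := abs_nonneg _
      rw [hsplit] at hm
      linarith

/-- Integrability and continuity for a single outcome. -/
private lemma aux_int_cont {Ω : Type*} [MeasurableSpace Ω] (μ : Measure Ω)
    [IsProbabilityMeasure μ]
    (Y : Ω → ℝ) (hYmeas : Measurable Y) (hYnonneg : ∀ ω, 0 ≤ Y ω)
    (m : ℝ → ℝ)
    (hm_cont : ContinuousOn m (Ici 0))
    (hm_mono : MonotoneOn m (Ici 0))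
    (hm_loglike : Tendsto (fun y => m y / Real.log y) atTop (nhds 1))
    (hint : IntegrableOn (fun ω => Real.log (Y ω)) {ω | 0 < Y ω} μ) :
    (∀ a : ℝ, 0 ≤ a → Integrable (fun ω => m (a * Y ω)) μ) ∧
    ContinuousOn (fun a => ∫ ω, m (a * Y ω) ∂μ) (Ici 0) := by
  -- extend m continuously to all of ℝ
  set m' : ℝ → ℝ := fun y => m (max y 0) with hm'def
  have hm'c : Continuous m' :=
    hm_cont.comp_continuous (continuous_id.max continuous_const)
      (fun x => mem_Ici.mpr (le_max_right x 0))
  have hkey : ∀ a : ℝ, 0 ≤ a → ∀ ω, m (a * Y ω) = m' (a * Y ω) := by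
    intro a ha ω
    simp only [hm'def, max_eq_left (mul_nonneg ha (hYnonneg ω))]
  -- log ∘ Y is integrable on all of Ω
  have hlog_int : Integrable (fun ω => Real.log (Y ω)) μ := by
    have hs : MeasurableSet {ω | 0 < Y ω} := measurableSet_lt measurable_const hYmeas
    have h0 : EqOn (fun ω => Real.log (Y ω)) 0 {ω | 0 < Y ω}ᶜ := by
      intro ω hω
      have : Y ω = 0 := le_antisymm (not_lt.mp hω) (hYnonneg ω)
      simp [this]
    have hcompl : IntegrableOn (fun ω => Real.log (Y ω)) {ω | 0 < Y ω}ᶜ μ :=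
      (integrableOn_congr_fun h0 hs.compl).mpr (integrableOn_zero)
    rw [← integrableOn_univ, ← union_compl_self {ω | 0 < Y ω}]
    exact hint.union hcompl
  -- measurability
  have hmeas : ∀ a : ℝ, 0 ≤ a → AEStronglyMeasurable (fun ω => m (a * Y ω)) μ := by
    intro a ha
    have : AEStronglyMeasurable (fun ω => m' (a * Y ω)) μ :=
      (hm'c.measurable.comp (measurable_const.mul hYmeas)).aestronglyMeasurable
    exact this.congr (ae_of_all _ (fun ω => (hkey a ha ω).symm))
  -- dominating function machinery at scale A
  have hbound := loglike_bound m hm_mono hm_loglike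
  have hint_all : ∀ a : ℝ, 0 ≤ a → Integrable (fun ω => m (a * Y ω)) μ := by
    intro a ha
    obtain ⟨C, hC⟩ := hbound (a + 1) (by linarith)
    have hg_int : Integrable (fun ω => C + 2 * |Real.log (Y ω)|) μ :=
      (integrable_const C).add ((hlog_int.abs).const_mul 2)
    refine hg_int.mono' (hmeas a ha) (ae_of_all _ ?_)
    intro ω
    rw [Real.norm_eq_abs]
    exact hC a ⟨ha, by linarith⟩ (Y ω) (hYnonneg ω)
  refine ⟨hint_all, ?_⟩
  intro a₀ ha₀
  have hne : NeBot (𝓝[Ici (0:ℝ)] a₀) :=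
    mem_closure_iff_nhdsWithin_neBot.mp (subset_closure ha₀)
  obtain ⟨C, hC⟩ := hbound (a₀ + 1) (by simp at ha₀; linarith)
  have hg_int : Integrable (fun ω => C + 2 * |Real.log (Y ω)|) μ :=
    (integrable_const C).add ((hlog_int.abs).const_mul 2)
  have hIcc : Icc (0:ℝ) (a₀ + 1) ∈ 𝓝[Ici 0] a₀ := by
    have h1 : Iio (a₀ + 1) ∈ 𝓝[Ici (0:ℝ)] a₀ :=
      mem_nhdsWithin_of_mem_nhds (Iio_mem_nhds (lt_add_one a₀))
    refine mem_of_superset (Filter.inter_mem self_mem_nhdsWithin h1) ?_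
    rintro a ⟨h0, h1'⟩
    exact ⟨h0, le_of_lt h1'⟩
  refine tendsto_integral_filter_of_dominated_convergence
    (fun ω => C + 2 * |Real.log (Y ω)|) ?_ ?_ hg_int ?_
  · filter_upwards [self_mem_nhdsWithin] with a ha
    exact hmeas a ha
  · filter_upwards [hIcc] with a ha
    refine ae_of_all _ (fun ω => ?_)
    rw [Real.norm_eq_abs]
    exact hC a ha (Y ω) (hYnonneg ω)
  · refine ae_of_all _ (fun ω => ?_)
    have hcont : Tendsto (fun a => m' (a * Y ω)) (𝓝 a₀) (𝓝 (m' (a₀ * Y ω))) :=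
      (hm'c.comp (continuous_id.mul continuous_const)).tendsto a₀
    have hcont' : Tendsto (fun a => m' (a * Y ω)) (𝓝[Ici 0] a₀) (𝓝 (m' (a₀ * Y ω))) :=
      hcont.mono_left nhdsWithin_le_nhds
    rw [hkey a₀ ha₀ ω]
    refine hcont'.congr' ?_
    filter_upwards [self_mem_nhdsWithin] with a ha
    exact (hkey a ha ω).symm

/-- for a log-like transformation `m` (continuous, weakly increasing,
`m(y)/log y → 1`), the map `a ↦ E[m(aY(1)) - m(aY(0))]` is continuous on `[0,∞)`. -/
theorem stmt_2
    {Ω : Type*} [MeasurableSpace Ω] (μ : Measure Ω) [IsProbabilityMeasure μ]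
    (Y1 Y0 : Ω → ℝ) (hY1meas : Measurable Y1) (hY0meas : Measurable Y0)
    (hY1nonneg : ∀ ω, 0 ≤ Y1 ω) (hY0nonneg : ∀ ω, 0 ≤ Y0 ω)
    (m : ℝ → ℝ)
    (hm_cont : ContinuousOn m (Ici 0))
    (hm_mono : MonotoneOn m (Ici 0))
    (hm_loglike : Tendsto (fun y => m y / Real.log y) atTop (nhds 1))
    -- E[|log Y(d)| ∣ Y(d) > 0] < ∞ for d = 0,1
    (hint1 : IntegrableOn (fun ω => Real.log (Y1 ω)) {ω | 0 < Y1 ω} μ)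
    (hint0 : IntegrableOn (fun ω => Real.log (Y0 ω)) {ω | 0 < Y0 ω} μ) :
    ContinuousOn (fun a => ∫ ω, (m (a * Y1 ω) - m (a * Y0 ω)) ∂μ) (Ici 0) := by
  obtain ⟨hI1, hC1⟩ := aux_int_cont μ Y1 hY1meas hY1nonneg m hm_cont hm_mono hm_loglike hint1
  obtain ⟨hI0, hC0⟩ := aux_int_cont μ Y0 hY0meas hY0nonneg m hm_cont hm_mono hm_loglike hint0
  refine (hC1.sub hC0).congr ?_
  intro a ha
  exact integral_sub (hI1 a ha) (hI0 a ha)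
end

section
/- Let P_++ denote the set of distributions supported on compact subsets of (0,∞)². Suppose g : (0,∞)² → ℝ is weakly increasing in its first argument and scale-invariant. Then θ_g = E_P[g(Y(1),Y(0))] is point-identified over P_++ if and only if there exist constants c ≥ 0 and d ∈ ℝ such that g(y₁,y₀) = c·(log(y₁) − log(y₀)) + d for all y₁, y₀ > 0. -/
/-! If `θ_g` is identified, the uniform distributions on `{(x₁, y₁), (x₂, y₂)}` and on
`{(x₁, y₂), (x₂, y₁)}` have the same marginals, so `g x₁ y₁ + g x₂ y₂ = g x₁ y₂ + g x₂ y₁`.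
By scale invariance `g y₁ y₀ = h (log y₁ - log y₀)` with `h t = g (exp t) 1`, and this rectangle
identity becomes Cauchy's equation for `h - h 0`; being monotone, `h - h 0` is linear.
Conversely, `E_P[c (log Y(1) - log Y(0)) + d]` splits into expectations under the two marginals,
all finite because `P` lives on a compact subset of `(0,∞)²`. -/

open MeasureTheory Filter Set

open scoped ENNReal

namespace MeasureTheory.Measure

variable {α β : Type*} [MeasurableSpace α] [MeasurableSpace β]

noncomputable def twoPoint (p q : α) : Measure α :=
  (2 : ℝ≥0∞)⁻¹ • (dirac p + dirac q)

instance isProbabilityMeasure_twoPoint (p q : α) : IsProbabilityMeasure (twoPoint p q) :=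
  ⟨by simp [twoPoint, ENNReal.inv_two_add_inv_two]⟩

lemma twoPoint_comm (p q : α) : twoPoint p q = twoPoint q p := by
  rw [twoPoint, twoPoint, add_comm]

lemma map_twoPoint {f : α → β} (hf : Measurable f) (p q : α) :
    (twoPoint p q).map f = twoPoint (f p) (f q) := by
  rw [twoPoint, twoPoint, Measure.map_smul, Measure.map_add _ _ hf, map_dirac' hf, map_dirac' hf]

lemma twoPoint_compl_pair [MeasurableSingletonClass α] (p q : α) :
    twoPoint p q ({p, q}ᶜ) = 0 := by
  simp [twoPoint]

lemma integral_twoPoint [MeasurableSingletonClass α] (f : α → ℝ) (p q : α) :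
    ∫ x, f x ∂twoPoint p q = (f p + f q) / 2 := by
  rw [twoPoint, integral_smul_measure,
    integral_add_measure (integrable_dirac enorm_lt_top) (integrable_dirac enorm_lt_top),
    integral_dirac, integral_dirac]
  simp [div_eq_inv_mul]

end MeasureTheory.Measure

def IsSupportedOnCompactSubset {X : Type*} [TopologicalSpace X] [MeasurableSpace X]
    (s : Set X) (μ : Measure X) : Prop :=
  ∃ K, IsCompact K ∧ K ⊆ s ∧ μ Kᶜ = 0

namespace IsSupportedOnCompactSubset

variable {X : Type*} [TopologicalSpace X] [MeasurableSpace X] {s : Set X} {μ : Measure X}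

lemma twoPoint [MeasurableSingletonClass X] {p q : X} (hp : p ∈ s) (hq : q ∈ s) :
    IsSupportedOnCompactSubset s (Measure.twoPoint p q) :=
  ⟨{p, q}, (toFinite _).isCompact, pair_subset hp hq, Measure.twoPoint_compl_pair p q⟩

lemma ae_mem (hμ : IsSupportedOnCompactSubset s μ) : ∀ᵐ x ∂μ, x ∈ s := by
  obtain ⟨K, -, hKs, hμK⟩ := hμ
  exact mem_of_superset (mem_ae_iff.2 hμK) hKs

lemma integrable_of_continuousOn [OpensMeasurableSpace X] [T2Space X] [IsFiniteMeasure μ]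
    (hμ : IsSupportedOnCompactSubset s μ) {f : X → ℝ} (hf : ContinuousOn f s) :
    Integrable f μ := by
  obtain ⟨K, hK, hKs, hμK⟩ := hμ
  have hrestrict : μ.restrict K = μ := Measure.restrict_eq_self_of_ae_mem (mem_ae_iff.2 hμK)
  simpa only [IntegrableOn, hrestrict] using (hf.mono hKs).integrableOn_compact (μ := μ) hK

end IsSupportedOnCompactSubset

section Identification

variable {α β : Type*} [TopologicalSpace α] [TopologicalSpace β]
  [MeasurableSpace α] [MeasurableSpace β]

def IsPointIdentifiedOn (s : Set (α × β)) (f : α × β → ℝ) : Prop :=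
  ∀ P Q : Measure (α × β), IsProbabilityMeasure P → IsProbabilityMeasure Q →
    IsSupportedOnCompactSubset s P → IsSupportedOnCompactSubset s Q →
    P.map Prod.fst = Q.map Prod.fst → P.map Prod.snd = Q.map Prod.snd →
    ∫ x, f x ∂P = ∫ x, f x ∂Q

lemma IsSupportedOnCompactSubset.integral_eq_of_eqOn_add [OpensMeasurableSpace (α × β)]
    [T2Space α] [T2Space β] {s : Set (α × β)} {P : Measure (α × β)} [IsFiniteMeasure P]
    (hP : IsSupportedOnCompactSubset s P) {f : α × β → ℝ} {u : α → ℝ} {v : β → ℝ}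
    (hu : Measurable u) (hv : Measurable v) (hu_cont : ContinuousOn (fun x => u x.1) s)
    (hv_cont : ContinuousOn (fun x => v x.2) s) (hf : EqOn f (fun x => u x.1 + v x.2) s) :
    ∫ x, f x ∂P = ∫ a, u a ∂P.map Prod.fst + ∫ b, v b ∂P.map Prod.snd := by
  rw [integral_map measurable_fst.aemeasurable hu.aestronglyMeasurable,
    integral_map measurable_snd.aemeasurable hv.aestronglyMeasurable,
    ← integral_add (hP.integrable_of_continuousOn hu_cont) (hP.integrable_of_continuousOn hv_cont)]
  exact integral_congr_ae (hP.ae_mem.mono fun x hx => hf hx)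

lemma IsPointIdentifiedOn.of_eqOn_add [OpensMeasurableSpace (α × β)] [T2Space α] [T2Space β]
    {s : Set (α × β)} {f : α × β → ℝ} (u : α → ℝ) (v : β → ℝ)
    (hu : Measurable u) (hv : Measurable v) (hu_cont : ContinuousOn (fun x => u x.1) s)
    (hv_cont : ContinuousOn (fun x => v x.2) s) (hf : EqOn f (fun x => u x.1 + v x.2) s) :
    IsPointIdentifiedOn s f := by
  intro P Q _ _ hP hQ h_fst h_snd
  rw [hP.integral_eq_of_eqOn_add hu hv hu_cont hv_cont hf,
    hQ.integral_eq_of_eqOn_add hu hv hu_cont hv_cont hf, h_fst, h_snd]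

lemma IsPointIdentifiedOn.add_eq_add_swap [MeasurableSingletonClass (α × β)]
    {s : Set (α × β)} {f : α × β → ℝ} (hf : IsPointIdentifiedOn s f) {x₁ x₂ : α} {y₁ y₂ : β}
    (h₁₁ : (x₁, y₁) ∈ s) (h₂₂ : (x₂, y₂) ∈ s) (h₁₂ : (x₁, y₂) ∈ s) (h₂₁ : (x₂, y₁) ∈ s) :
    f (x₁, y₁) + f (x₂, y₂) = f (x₁, y₂) + f (x₂, y₁) := by
  have h := hf (Measure.twoPoint (x₁, y₁) (x₂, y₂)) (Measure.twoPoint (x₁, y₂) (x₂, y₁))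
    inferInstance inferInstance (.twoPoint h₁₁ h₂₂) (.twoPoint h₁₂ h₂₁)
    (by rw [Measure.map_twoPoint measurable_fst, Measure.map_twoPoint measurable_fst])
    (by rw [Measure.map_twoPoint measurable_snd, Measure.map_twoPoint measurable_snd,
      Measure.twoPoint_comm])
  rw [Measure.integral_twoPoint, Measure.integral_twoPoint] at h
  linarith

end Identification

/-- Monotone, hence measurable, hence continuous (Steinhaus), hence `ℝ`-linear. -/
lemma Real.eq_mul_of_map_add_of_monotone {f : ℝ → ℝ} (hadd : ∀ x y, f (x + y) = f x + f y)
    (hf : Monotone f) (x : ℝ) : f x = f 1 * x := by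
  let φ : ℝ →+ ℝ := AddMonoidHom.mk' f hadd
  have hφ : Continuous φ := Measure.AddMonoidHom.continuous_of_measurable φ hf.measurable
  simpa [φ, mul_comm] using map_real_smul φ hφ x 1

lemma Real.eq_affine_of_monotone {h : ℝ → ℝ} (hmono : Monotone h)
    (heq : ∀ s t, h (s + t) + h 0 = h s + h t) (t : ℝ) :
    h t = (h 1 - h 0) * t + h 0 := by
  have := Real.eq_mul_of_map_add_of_monotone (f := fun t => h t - h 0)
    (fun s t => by linarith [heq s t]) (fun s t hst => sub_le_sub_right (hmono hst) _) t
  linarith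

lemma IsPointIdentifiedOn.of_eqOn_log_sub_log {f : ℝ × ℝ → ℝ} (c d : ℝ)
    (hf : EqOn f (fun x => c * (Real.log x.1 - Real.log x.2) + d)
      {x : ℝ × ℝ | 0 < x.1 ∧ 0 < x.2}) :
    IsPointIdentifiedOn {x : ℝ × ℝ | 0 < x.1 ∧ 0 < x.2} f := by
  refine .of_eqOn_add (fun y => c * Real.log y + d) (fun y => -(c * Real.log y))
    (by fun_prop) (by fun_prop) ?_ ?_ fun x hx => by rw [hf hx]; ring
  · exact (continuousOn_const.mul (Real.continuousOn_log.comp continuous_fst.continuousOn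
      fun x hx => hx.1.ne')).add continuousOn_const
  · exact (continuousOn_const.mul (Real.continuousOn_log.comp continuous_snd.continuousOn
      fun x hx => hx.2.ne')).neg

lemma eq_exp_log_sub_log_of_scale_invariant {g : ℝ → ℝ → ℝ}
    (hscale : ∀ a y1 y0 : ℝ, 0 < a → 0 < y1 → 0 < y0 → g (a * y1) (a * y0) = g y1 y0)
    {y₁ y₀ : ℝ} (h₁ : 0 < y₁) (h₀ : 0 < y₀) :
    g y₁ y₀ = g (Real.exp (Real.log y₁ - Real.log y₀)) 1 := by
  rw [Real.exp_sub, Real.exp_log h₁, Real.exp_log h₀,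
    ← hscale y₀ (y₁ / y₀) 1 h₀ (by positivity) one_pos, mul_div_cancel₀ _ h₀.ne', mul_one]

lemma exists_log_linear_of_isPointIdentifiedOn {g : ℝ → ℝ → ℝ}
    (hmono : Monotone fun t => g (Real.exp t) 1)
    (hscale : ∀ a y1 y0 : ℝ, 0 < a → 0 < y1 → 0 < y0 → g (a * y1) (a * y0) = g y1 y0)
    (hg : IsPointIdentifiedOn {x : ℝ × ℝ | 0 < x.1 ∧ 0 < x.2} fun x => g x.1 x.2) :
    ∃ c d : ℝ, 0 ≤ c ∧ ∀ y1 y0 : ℝ, 0 < y1 → 0 < y0 →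
      g y1 y0 = c * (Real.log y1 - Real.log y0) + d := by
  set h : ℝ → ℝ := fun t => g (Real.exp t) 1
  have hg_exp (a b : ℝ) : g (Real.exp a) (Real.exp b) = h (a - b) := by
    rw [eq_exp_log_sub_log_of_scale_invariant hscale (Real.exp_pos a) (Real.exp_pos b),
      Real.log_exp, Real.log_exp]
  have hcocycle (s t : ℝ) : h (s + t) + h 0 = h s + h t := by
    have := hg.add_eq_add_swap (x₁ := Real.exp (s + t)) (x₂ := Real.exp t) (y₁ := Real.exp t)
      (y₂ := Real.exp 0) ⟨Real.exp_pos _, Real.exp_pos _⟩ ⟨Real.exp_pos _, Real.exp_pos _⟩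
      ⟨Real.exp_pos _, Real.exp_pos _⟩ ⟨Real.exp_pos _, Real.exp_pos _⟩
    simp only [hg_exp, add_sub_cancel_right, sub_zero, sub_self] at this
    linarith
  refine ⟨h 1 - h 0, h 0, sub_nonneg.2 (hmono zero_le_one), fun y₁ y₀ h₁ h₀ => ?_⟩
  rw [eq_exp_log_sub_log_of_scale_invariant hscale h₁ h₀]
  exact Real.eq_affine_of_monotone hmono hcocycle _

/-- Chen–Roth, Proposition A.1: for `g : (0,∞)² → ℝ` weakly increasing
in its first argument and scale-invariant, `θ_g = E_P[g(Y(1),Y(0))]` is point-identified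
over all distributions supported on compact subsets of `(0,∞)²` if and only if
`g(y₁,y₀) = c·(log y₁ − log y₀) + d` for some `c ≥ 0` and `d ∈ ℝ`. -/
theorem stmt_6 (g : ℝ → ℝ → ℝ)
    (hmono : ∀ y0 : ℝ, 0 < y0 → ∀ y1 y1' : ℝ, 0 < y1 → y1 ≤ y1' → g y1 y0 ≤ g y1' y0)
    (hscale : ∀ a y1 y0 : ℝ, 0 < a → 0 < y1 → 0 < y0 → g (a * y1) (a * y0) = g y1 y0) :
    (∀ P Q : Measure (ℝ × ℝ), IsProbabilityMeasure P → IsProbabilityMeasure Q →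
      (∃ K : Set (ℝ × ℝ), IsCompact K ∧ K ⊆ {x : ℝ × ℝ | 0 < x.1 ∧ 0 < x.2} ∧ P Kᶜ = 0) →
      (∃ K : Set (ℝ × ℝ), IsCompact K ∧ K ⊆ {x : ℝ × ℝ | 0 < x.1 ∧ 0 < x.2} ∧ Q Kᶜ = 0) →
      P.map Prod.fst = Q.map Prod.fst →
      P.map Prod.snd = Q.map Prod.snd →
      ∫ x, g x.1 x.2 ∂P = ∫ x, g x.1 x.2 ∂Q)
    ↔ (∃ c d : ℝ, 0 ≤ c ∧ ∀ y1 y0 : ℝ, 0 < y1 → 0 < y0 →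
        g y1 y0 = c * (Real.log y1 - Real.log y0) + d) := by
  have hmono_exp : Monotone fun t => g (Real.exp t) 1 := fun s t hst =>
    hmono 1 one_pos _ _ (Real.exp_pos s) (Real.exp_le_exp.2 hst)
  refine ⟨exists_log_linear_of_isPointIdentifiedOn hmono_exp hscale, ?_⟩
  rintro ⟨c, d, -, hg⟩
  exact IsPointIdentifiedOn.of_eqOn_log_sub_log c d fun x hx => hg x.1 x.2 hx.1 hx.2
end

section
/- Let g : (0,∞)² → ℝ and suppose θ_g = E_P[g(Y(1),Y(0))] is point-identified over all finitely supported distributions on (0,∞)². Then for all y₁, y₀, a, b > 0, g(y₁,y₀) + g(y₁+a, y₀+b) = g(y₁+a, y₀) + g(y₁, y₀+b); consequently g is additively separable, i.e. g(y₁,y₀) = r(y₁) + q(1/y₀) where r(y₁) = g(y₁,1) − g(1,1) and q(1/y₀) = g(1,y₀). -/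
open MeasureTheory Filter Set

private lemma integrable_dirac' {α : Type*} [MeasurableSpace α] [MeasurableSingletonClass α]
    (f : α → ℝ) (a : α) : Integrable f (Measure.dirac a) := by
  refine (integrable_const (f a)).congr ?_
  refine (ae_iff.2 ?_)
  have : {x | ¬ f a = f x} ⊆ {a}ᶜ := by
    intro x hx
    simp only [mem_compl_iff, mem_singleton_iff]
    rintro rfl; exact hx rfl
  refine measure_mono_null this ?_
  simp [Measure.dirac_apply']

private lemma integral_two_point (g : ℝ → ℝ → ℝ) (a b : ℝ × ℝ) :
    ∫ x, g x.1 x.2 ∂((2:ENNReal)⁻¹ • (Measure.dirac a + Measure.dirac b))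
      = 2⁻¹ * (g a.1 a.2 + g b.1 b.2) := by
  rw [integral_smul_measure,
    integral_add_measure (integrable_dirac' _ a) (integrable_dirac' _ b),
    integral_dirac, integral_dirac]
  simp [ENNReal.toReal_inv]

private lemma pair_prob (a b : ℝ × ℝ) :
    IsProbabilityMeasure ((2:ENNReal)⁻¹ • (Measure.dirac a + Measure.dirac b)) := by
  constructor
  simp only [Measure.smul_apply, Measure.add_apply, measure_univ, smul_eq_mul]
  rw [one_add_one_eq_two, ENNReal.inv_mul_cancel (by norm_num) (by norm_num)]

/-- additive separability from point-identification: if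
`θ_g = E_P[g(Y(1),Y(0))]` is point-identified over all finitely supported distributions
on `(0,∞)²`, then `g` satisfies the rectangle condition
`g(y₁,y₀) + g(y₁+a,y₀+b) = g(y₁+a,y₀) + g(y₁,y₀+b)` and is additively separable:
`g(y₁,y₀) = r(y₁) + q(1/y₀)` with `r(y₁) = g(y₁,1) − g(1,1)` and `q(1/y₀) = g(1,y₀)`. -/
theorem stmt_7 (g : ℝ → ℝ → ℝ)
    (hident : ∀ P Q : Measure (ℝ × ℝ), IsProbabilityMeasure P → IsProbabilityMeasure Q →
      (∃ s : Finset (ℝ × ℝ), P ((↑s : Set (ℝ × ℝ))ᶜ) = 0) →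
      (∃ s : Finset (ℝ × ℝ), Q ((↑s : Set (ℝ × ℝ))ᶜ) = 0) →
      P {x : ℝ × ℝ | ¬ (0 < x.1 ∧ 0 < x.2)} = 0 →
      Q {x : ℝ × ℝ | ¬ (0 < x.1 ∧ 0 < x.2)} = 0 →
      P.map Prod.fst = Q.map Prod.fst →
      P.map Prod.snd = Q.map Prod.snd →
      ∫ x, g x.1 x.2 ∂P = ∫ x, g x.1 x.2 ∂Q) :
    (∀ y1 y0 a b : ℝ, 0 < y1 → 0 < y0 → 0 < a → 0 < b →
      g y1 y0 + g (y1 + a) (y0 + b) = g (y1 + a) y0 + g y1 (y0 + b)) ∧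
    (∀ y1 y0 : ℝ, 0 < y1 → 0 < y0 → g y1 y0 = (g y1 1 - g 1 1) + g 1 y0) := by
  have key : ∀ p1 p2 q1 q2 : ℝ, 0 < p1 → 0 < p2 → 0 < q1 → 0 < q2 →
      g p1 q1 + g p2 q2 = g p2 q1 + g p1 q2 := by
    intro p1 p2 q1 q2 hp1 hp2 hq1 hq2
    set P : Measure (ℝ × ℝ) :=
      (2:ENNReal)⁻¹ • (Measure.dirac (p1, q1) + Measure.dirac (p2, q2)) with hP
    set Q : Measure (ℝ × ℝ) :=
      (2:ENNReal)⁻¹ • (Measure.dirac (p2, q1) + Measure.dirac (p1, q2)) with hQ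
    have hsupP : ∃ s : Finset (ℝ × ℝ), P ((↑s : Set (ℝ × ℝ))ᶜ) = 0 := by
      refine ⟨{(p1, q1), (p2, q2)}, ?_⟩
      simp [hP, Measure.add_apply, Measure.dirac_apply']
    have hsupQ : ∃ s : Finset (ℝ × ℝ), Q ((↑s : Set (ℝ × ℝ))ᶜ) = 0 := by
      refine ⟨{(p2, q1), (p1, q2)}, ?_⟩
      simp [hQ, Measure.add_apply, Measure.dirac_apply']
    have hposP : P {x : ℝ × ℝ | ¬ (0 < x.1 ∧ 0 < x.2)} = 0 := by
      simp [hP, Measure.add_apply, Measure.dirac_apply', hp1, hp2, hq1, hq2]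
    have hposQ : Q {x : ℝ × ℝ | ¬ (0 < x.1 ∧ 0 < x.2)} = 0 := by
      simp [hQ, Measure.add_apply, Measure.dirac_apply', hp1, hp2, hq1, hq2]
    have hfst : P.map Prod.fst = Q.map Prod.fst := by
      simp only [hP, hQ, Measure.map_smul, Measure.map_add _ _ measurable_fst,
        Measure.map_dirac' measurable_fst]
      rw [add_comm (Measure.dirac (p2, q1).1)]
    have hsnd : P.map Prod.snd = Q.map Prod.snd := by
      simp only [hP, hQ, Measure.map_smul, Measure.map_add _ _ measurable_snd,
        Measure.map_dirac' measurable_snd]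
    have h := hident P Q (pair_prob _ _) (pair_prob _ _) hsupP hsupQ hposP hposQ hfst hsnd
    rw [hP, hQ, integral_two_point, integral_two_point] at h
    simp only at h
    linarith
  refine ⟨fun y1 y0 a b h1 h0 ha hb => key y1 (y1 + a) y0 (y0 + b) h1 (by linarith) h0 (by linarith),
    fun y1 y0 h1 h0 => ?_⟩
  have := key y1 1 y0 1 h1 one_pos h0 one_pos
  linarith
end

section
/- Fix a dataset (X_i,Y_i)_{i=1}^N with X_i ∈ ℝ^J, Y_i ∈ [0,∞), such that the sample Gram matrix (1/N)∑_i X_iX_i' is invertible. Let m : [0,∞) → ℝ be continuous, weakly increasing, with m(y)/log(y) → 1 as y → ∞. Let β̂(a) be the OLS coefficient of m(aY_i) on X_i, ε̂_i(a) = m(aY_i) − X_i'β̂(a), and let t̂_{β_j}(a) = β̂_j(a)/σ̂_{β_j}(a) be the t-statistic formed with the heteroskedasticity-robust (sandwich) standard error σ̂_{β_j}(a). Let γ̂ be the OLS coefficient of 1[Y_i>0] on X_i, û_i = 1[Y_i>0] − X_i'γ̂, and t̂_{γ_j} = γ̂_j/σ̂_{γ_j} the corresponding heteroskedasticity-robust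 t-statistic, assumed to have σ̂_{γ_j} > 0. If γ̂_j > 0, then t̂_{β_j}(a) → t̂_{γ_j} as a → ∞. -/
open Filter

/-- Chen–Roth, Proposition A.4, robust t-statistics: for a fixed
dataset with invertible Gram matrix, the heteroskedasticity-robust t-statistic of the
OLS coefficient of `m(aY)` on `X` converges, as `a → ∞`, to the robust t-statistic of
the OLS coefficient of `1[Y>0]` on `X`, provided the latter coefficient is positive and
its standard error nonzero. -/
theorem stmt_14
    {N J : ℕ} (hN : 0 < N)
    (X : Fin N → Fin J → ℝ) (Y : Fin N → ℝ)
    (hYnonneg : ∀ i, 0 ≤ Y i)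
    (m : ℝ → ℝ)
    (hm_cont : ContinuousOn m (Set.Ici 0))
    (hm_mono : MonotoneOn m (Set.Ici 0))
    (hm_loglike : Tendsto (fun y => m y / Real.log y) atTop (nhds 1))
    -- sample Gram matrix and its invertibility
    (G : Matrix (Fin J) (Fin J) ℝ)
    (hG : G = Matrix.of fun k l => (N : ℝ)⁻¹ * ∑ i, X i k * X i l)
    (hGunit : IsUnit G)
    -- OLS of m(aY) on X, residuals, sandwich variance, standard errors
    (βhat : ℝ → Fin J → ℝ)
    (hβ : ∀ a, βhat a = G⁻¹.mulVec fun k => (N : ℝ)⁻¹ * ∑ i, X i k * m (a * Y i))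
    (εhat : Fin N → ℝ → ℝ)
    (hε : ∀ i a, εhat i a = m (a * Y i) - ∑ k, X i k * βhat a k)
    (Ωβ : ℝ → Matrix (Fin J) (Fin J) ℝ)
    (hΩβ : ∀ a, Ωβ a =
      G⁻¹ * (Matrix.of fun k l => (N : ℝ)⁻¹ * ∑ i, X i k * X i l * (εhat i a) ^ 2) * G⁻¹)
    (σβ : ℝ → Fin J → ℝ)
    (hσβ : ∀ a j, σβ a j = Real.sqrt ((Ωβ a) j j) / Real.sqrt (N : ℝ))
    -- OLS of 1[Y>0] on X, residuals, sandwich variance, standard errors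
    (γhat : Fin J → ℝ)
    (hγ : γhat = G⁻¹.mulVec fun k =>
      (N : ℝ)⁻¹ * ∑ i, X i k * (if 0 < Y i then (1 : ℝ) else 0))
    (uhat : Fin N → ℝ)
    (hu : ∀ i, uhat i = (if 0 < Y i then (1 : ℝ) else 0) - ∑ k, X i k * γhat k)
    (Ωγ : Matrix (Fin J) (Fin J) ℝ)
    (hΩγ : Ωγ =
      G⁻¹ * (Matrix.of fun k l => (N : ℝ)⁻¹ * ∑ i, X i k * X i l * (uhat i) ^ 2) * G⁻¹)
    (σγ : Fin J → ℝ)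
    (hσγ : ∀ j, σγ j = Real.sqrt (Ωγ j j) / Real.sqrt (N : ℝ))
    (j : Fin J)
    (hσγpos : 0 < σγ j)
    (hγpos : 0 < γhat j) :
    Tendsto (fun a => βhat a j / σβ a j) atTop (nhds (γhat j / σγ j)) := by

  have hL : Tendsto Real.log atTop atTop := Real.tendsto_log_atTop
  -- Step A: pointwise limit of m(aY_i)/log a
  have hf : ∀ i : Fin N, Tendsto (fun a => m (a * Y i) / Real.log a) atTop
      (nhds (if 0 < Y i then (1:ℝ) else 0)) := by
    intro i
    rcases (hYnonneg i).lt_or_eq with hY | hY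
    · rw [if_pos hY]
      have h1 : Tendsto (fun a : ℝ => a * Y i) atTop atTop :=
        Tendsto.atTop_mul_const hY tendsto_id
      have h2 : Tendsto (fun a => m (a * Y i) / Real.log (a * Y i)) atTop (nhds 1) :=
        hm_loglike.comp h1
      have h3 : Tendsto (fun a => Real.log (a * Y i) / Real.log a) atTop (nhds 1) := by
        have heq : ∀ᶠ a in atTop, Real.log (a * Y i) / Real.log a
            = 1 + Real.log (Y i) / Real.log a := by
          filter_upwards [eventually_gt_atTop 0, hL.eventually (eventually_ne_atTop 0)]
            with a ha hla
          rw [Real.log_mul (ne_of_gt ha) (ne_of_gt hY), add_div, div_self hla]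
        rw [tendsto_congr' heq]
        have h4 : Tendsto (fun a : ℝ => Real.log (Y i) / Real.log a) atTop (nhds 0) :=
          tendsto_const_nhds.div_atTop hL
        simpa using (tendsto_const_nhds (x := (1:ℝ))).add h4
      have heq2 : ∀ᶠ a in atTop,
          m (a * Y i) / Real.log (a * Y i) * (Real.log (a * Y i) / Real.log a)
            = m (a * Y i) / Real.log a := by
        filter_upwards [(hL.comp h1).eventually (eventually_ne_atTop 0)] with a hb
        rw [div_mul_div_comm, mul_comm (m (a * Y i))]
        exact mul_div_mul_left _ _ hb
      have := h2.mul h3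
      rw [tendsto_congr' heq2] at this
      simpa using this
    · rw [if_neg (by rw [← hY]; exact lt_irrefl 0)]
      have : (fun a : ℝ => m (a * Y i) / Real.log a) = fun a => m 0 / Real.log a := by
        funext a; rw [← hY, mul_zero]
      rw [this]
      exact tendsto_const_nhds.div_atTop hL
  -- Step B: βhat a k / log a → γhat k
  have hβ' : ∀ k, Tendsto (fun a => βhat a k / Real.log a) atTop (nhds (γhat k)) := by
    intro k
    have hfun : ∀ a, βhat a k / Real.log a
        = ∑ l, G⁻¹ k l * ((N : ℝ)⁻¹ * ∑ i, X i l * (m (a * Y i) / Real.log a)) := by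
      intro a
      rw [hβ]
      simp [Matrix.mulVec, dotProduct, Finset.sum_div, mul_div_assoc]
    have hval : γhat k
        = ∑ l, G⁻¹ k l * ((N : ℝ)⁻¹ * ∑ i, X i l * (if 0 < Y i then (1:ℝ) else 0)) := by
      rw [hγ]; simp [Matrix.mulVec, dotProduct]
    simp only [hfun, hval]
    exact tendsto_finset_sum _ fun l _ =>
      (tendsto_finset_sum _ fun i _ => (hf i).const_mul (X i l)).const_mul _ |>.const_mul _
  -- Step C: εhat i a / log a → uhat i
  have hε' : ∀ i, Tendsto (fun a => εhat i a / Real.log a) atTop (nhds (uhat i)) := by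
    intro i
    have hfun : ∀ a, εhat i a / Real.log a
        = m (a * Y i) / Real.log a - ∑ k, X i k * (βhat a k / Real.log a) := by
      intro a
      rw [hε]
      simp [sub_div, Finset.sum_div, mul_div_assoc]
    have hval : uhat i
        = (if 0 < Y i then (1:ℝ) else 0) - ∑ k, X i k * γhat k := hu i
    simp only [hfun, hval]
    exact (hf i).sub (tendsto_finset_sum _ fun k _ => (hβ' k).const_mul _)
  -- Step D: Ωβ a j j / (log a)^2 → Ωγ j j
  have hΩ' : Tendsto (fun a => Ωβ a j j / (Real.log a) ^ 2) atTop (nhds (Ωγ j j)) := by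
    have hfun : ∀ a, Ωβ a j j / (Real.log a) ^ 2
        = ∑ l, (∑ k, G⁻¹ j k *
            ((N : ℝ)⁻¹ * ∑ i, X i k * X i l * (εhat i a / Real.log a) ^ 2)) * G⁻¹ l j := by
      intro a
      rw [hΩβ]
      simp only [Matrix.mul_apply, Matrix.of_apply, Finset.sum_div, Finset.sum_mul,
        Finset.mul_sum, div_eq_mul_inv, mul_comm, mul_left_comm, mul_assoc, ← div_pow,
        mul_pow, inv_pow]
    have hval : Ωγ j j
        = ∑ l, (∑ k, G⁻¹ j k *
            ((N : ℝ)⁻¹ * ∑ i, X i k * X i l * (uhat i) ^ 2)) * G⁻¹ l j := by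
      rw [hΩγ]
      simp only [Matrix.mul_apply, Matrix.of_apply, Finset.sum_mul, Finset.mul_sum,
        mul_comm, mul_left_comm, mul_assoc]
    simp only [hfun, hval]
    exact tendsto_finset_sum _ fun l _ =>
      (tendsto_finset_sum _ fun k _ =>
        ((tendsto_finset_sum _ fun i _ =>
          (((hε' i).pow 2).const_mul (X i k * X i l))).const_mul _).const_mul _).mul_const _
  -- Step E: σβ a j / log a → σγ j
  have hσ' : Tendsto (fun a => σβ a j / Real.log a) atTop (nhds (σγ j)) := by
    have hmain : Tendsto (fun a => Real.sqrt (Ωβ a j j / (Real.log a) ^ 2) / Real.sqrt N)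
        atTop (nhds (σγ j)) := by
      rw [hσγ]
      exact ((Real.continuous_sqrt.continuousAt.tendsto.comp hΩ').div_const _)
    have heq : ∀ᶠ a in atTop,
        Real.sqrt (Ωβ a j j / (Real.log a) ^ 2) / Real.sqrt N = σβ a j / Real.log a := by
      filter_upwards [hL.eventually (eventually_gt_atTop 0)] with a hla
      rw [hσβ, Real.sqrt_div' _ (sq_nonneg _), Real.sqrt_sq hla.le, div_right_comm]
    rw [← tendsto_congr' heq]
    exact hmain
  -- Final step
  have hne : σγ j ≠ 0 := ne_of_gt hσγpos
  have hdiv := (hβ' j).div hσ' hne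
  have heq : ∀ᶠ a in atTop,
      βhat a j / Real.log a / (σβ a j / Real.log a) = βhat a j / σβ a j := by
    filter_upwards [hL.eventually (eventually_ne_atTop 0)] with a hla
    rw [div_div_div_comm, div_self hla, div_one]
  rw [← tendsto_congr' heq]
  exact hdiv
end

section
/- Let m : [0,∞) → ℝ be continuous, weakly increasing, with m(y)/log(y) → 1 as y → ∞, and let (X_i,Y_i)_{i=1}^N be a dataset with invertible sample Gram matrix (1/N)∑_i X_iX_i'. Let β̂(a) denote the OLS coefficient of m(aY_i) on X_i and γ̂ the OLS coefficient of 1[Y_i>0] on X_i. Then for any sequence a_n → ∞, β̂(a_n)/log(a_n) = γ̂ + o(1), and consequently the scaled residuals satisfy ε̂_i(a_n)/log(a_n) = û_i + o(1) for each i, where ε̂_i(a) = m(aY_i) − X_i'β̂(a) and û_i = 1[Y_i>0] − X_i'γ̂. -/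
open Filter

lemma stmt15_key {m : ℝ → ℝ}
    (hm : Tendsto (fun y => m y / Real.log y) atTop (nhds 1))
    {a : ℕ → ℝ} (ha : Tendsto a atTop atTop) {y : ℝ} (hy : 0 ≤ y) :
    Tendsto (fun n => m (a n * y) / Real.log (a n)) atTop
      (nhds (if 0 < y then 1 else 0)) := by
  have hlog : Tendsto (fun n => Real.log (a n)) atTop atTop :=
    Real.tendsto_log_atTop.comp ha
  rcases hy.lt_or_eq with hy' | hy'
  · rw [if_pos hy']
    have hay : Tendsto (fun n => a n * y) atTop atTop := ha.atTop_mul_const hy'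
    have h1 : Tendsto (fun n => m (a n * y) / Real.log (a n * y)) atTop (nhds 1) :=
      hm.comp hay
    have hlay : Tendsto (fun n => Real.log (a n * y)) atTop atTop :=
      Real.tendsto_log_atTop.comp hay
    have hinv : Tendsto (fun n => (Real.log (a n))⁻¹) atTop (nhds 0) :=
      hlog.inv_tendsto_atTop
    have h2 : Tendsto (fun n => Real.log (a n * y) / Real.log (a n)) atTop (nhds 1) := by
      have heq : ∀ᶠ n in atTop,
          Real.log (a n * y) / Real.log (a n) = 1 + Real.log y * (Real.log (a n))⁻¹ := by
        filter_upwards [ha.eventually_gt_atTop 0, hlog.eventually_gt_atTop 0] with n hn hln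
        rw [Real.log_mul hn.ne' hy'.ne', add_div, div_self hln.ne', div_eq_mul_inv]
      have h3 : Tendsto (fun n => 1 + Real.log y * (Real.log (a n))⁻¹) atTop (nhds (1 + Real.log y * 0)) :=
        tendsto_const_nhds.add (tendsto_const_nhds.mul hinv)
      simpa using h3.congr' (heq.mono fun n h => h.symm)
    have := h1.mul h2
    rw [mul_one] at this
    refine this.congr' ?_
    filter_upwards [hlay.eventually_gt_atTop 0] with n hn
    rw [div_mul_div_comm, mul_comm (m (a n * y)), mul_div_mul_left _ _ hn.ne']
  · rw [← hy']
    simp only [mul_zero, lt_irrefl, if_false]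
    exact Tendsto.div_atTop tendsto_const_nhds hlog

/-- for any sequence `a_n → ∞`, the OLS coefficients of `m(a_n·Y)` on
`X` satisfy `β̂(a_n)/log(a_n) = γ̂ + o(1)` (componentwise), where `γ̂` is the OLS
coefficient of `1[Y>0]` on `X`; consequently the scaled residuals satisfy
`ε̂ᵢ(a_n)/log(a_n) = ûᵢ + o(1)` for each observation `i`. -/
theorem stmt_15
    {N J : ℕ}
    (X : Fin N → Fin J → ℝ) (Y : Fin N → ℝ)
    (hYnonneg : ∀ i, 0 ≤ Y i)
    (m : ℝ → ℝ)
    (hm_cont : ContinuousOn m (Set.Ici 0))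
    (hm_mono : MonotoneOn m (Set.Ici 0))
    (hm_loglike : Tendsto (fun y => m y / Real.log y) atTop (nhds 1))
    (G : Matrix (Fin J) (Fin J) ℝ)
    (hG : G = Matrix.of fun k l => (N : ℝ)⁻¹ * ∑ i, X i k * X i l)
    (hGunit : IsUnit G)
    (βhat : ℝ → Fin J → ℝ)
    (hβ : ∀ a, βhat a = G⁻¹.mulVec fun k => (N : ℝ)⁻¹ * ∑ i, X i k * m (a * Y i))
    (εhat : Fin N → ℝ → ℝ)
    (hε : ∀ i a, εhat i a = m (a * Y i) - ∑ k, X i k * βhat a k)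
    (γhat : Fin J → ℝ)
    (hγ : γhat = G⁻¹.mulVec fun k =>
      (N : ℝ)⁻¹ * ∑ i, X i k * (if 0 < Y i then (1 : ℝ) else 0))
    (uhat : Fin N → ℝ)
    (hu : ∀ i, uhat i = (if 0 < Y i then (1 : ℝ) else 0) - ∑ k, X i k * γhat k)
    (a : ℕ → ℝ) (ha : Tendsto a atTop atTop) :
    (∀ j : Fin J,
      Tendsto (fun n => βhat (a n) j / Real.log (a n)) atTop (nhds (γhat j))) ∧
    (∀ i : Fin N,
      Tendsto (fun n => εhat i (a n) / Real.log (a n)) atTop (nhds (uhat i))) := by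
  have key : ∀ i : Fin N, Tendsto (fun n => m (a n * Y i) / Real.log (a n)) atTop
      (nhds (if 0 < Y i then 1 else 0)) := fun i =>
    stmt15_key hm_loglike ha (hYnonneg i)
  have hβlim : ∀ j : Fin J,
      Tendsto (fun n => βhat (a n) j / Real.log (a n)) atTop (nhds (γhat j)) := by
    intro j
    have hγj : γhat j = ∑ k, G⁻¹ j k *
        ((N : ℝ)⁻¹ * ∑ i, X i k * (if 0 < Y i then (1 : ℝ) else 0)) := by
      rw [hγ]; simp [Matrix.mulVec, dotProduct]
    rw [hγj]
    have heq : ∀ n, βhat (a n) j / Real.log (a n) = ∑ k, G⁻¹ j k *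
        ((N : ℝ)⁻¹ * ∑ i, X i k * (m (a n * Y i) / Real.log (a n))) := by
      intro n
      rw [hβ]
      simp only [Matrix.mulVec, dotProduct, Finset.sum_div, mul_div_assoc]
    refine Tendsto.congr (fun n => (heq n).symm) ?_
    exact tendsto_finset_sum _ fun k _ => Tendsto.const_mul _ (Tendsto.const_mul _
      (tendsto_finset_sum _ fun i _ => Tendsto.const_mul _ (key i)))
  refine ⟨hβlim, fun i => ?_⟩
  have heq : ∀ n, εhat i (a n) / Real.log (a n) =
      m (a n * Y i) / Real.log (a n) -
        ∑ k, X i k * (βhat (a n) k / Real.log (a n)) := by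
    intro n
    rw [hε, sub_div, Finset.sum_div]
    simp only [mul_div_assoc]
  rw [hu]
  refine Tendsto.congr (fun n => (heq n).symm) ?_
  exact (key i).sub (tendsto_finset_sum _ fun k _ => Tendsto.const_mul _ (hβlim k))
end

section
/- Let (Y(1),Y(0)) be potential outcomes in [0,∞)² satisfying the monotonicity condition P(Y(1)=0, Y(0)>0) = 0, and suppose P(Y(1)>0) > 0 and P(Y(1)>0, Y(0)>0) > 0. Let θ = P(Y(0)>0)/P(Y(1)>0). Then E[Y(1) | Y(1)>0] = θ·E[Y(1) | Y(1)>0, Y(0)>0] + (1−θ)·E[Y(1) | Y(1)>0, Y(0)=0], assuming Y(1) is integrable. -/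
open MeasureTheory

/-! Monotonicity makes `{Y(0) > 0}` coincide, up to a null set, with the always-takers
`A = {Y(1) > 0, Y(0) > 0}`, so `θ = P(A) / P(Y(1) > 0)`. Since `{Y(1) > 0}` is the disjoint
union of `A` and the compliers `C = {Y(1) > 0, Y(0) = 0}`, with `P(Y(1) > 0) = P(A) + P(C)`,
the average of `Y(1)` over `{Y(1) > 0}` is the `θ`, `1 - θ` mixture of its averages over
`A` and `C`. -/

namespace MeasureTheory

variable {α : Type*} [MeasurableSpace α] {μ : Measure α}

theorem measure_setOf_and_eq_of_null {p q : α → Prop} (h : μ {x | ¬p x ∧ q x} = 0) :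
    μ {x | p x ∧ q x} = μ {x | q x} := by
  refine measure_eq_measure_of_null_sdiff (fun x hx => hx.2) ?_
  convert h using 2
  ext x
  simp only [Set.mem_sdiff, Set.mem_ofPred_eq]
  tauto

theorem setIntegral_div_eq_setAverage (f : α → ℝ) (s : Set α) :
    (∫ x in s, f x ∂μ) / (μ s).toReal = ⨍ x in s, f x ∂μ := by
  rw [setAverage_eq, smul_eq_mul, div_eq_inv_mul, measureReal_def]

theorem setAverage_union_eq_mixture [IsFiniteMeasure μ] {f : α → ℝ} {s t : Set α}
    (hd : AEDisjoint μ s t) (ht : NullMeasurableSet t μ) (hf : IntegrableOn f (s ∪ t) μ)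
    (h0 : μ (s ∪ t) ≠ 0) :
    ⨍ x in s ∪ t, f x ∂μ =
      μ.real s / μ.real (s ∪ t) * ⨍ x in s, f x ∂μ +
        (1 - μ.real s / μ.real (s ∪ t)) * ⨍ x in t, f x ∂μ := by
  have hpos : 0 < μ.real (s ∪ t) := ENNReal.toReal_pos h0 (measure_ne_top μ _)
  have hsum : μ.real (s ∪ t) = μ.real s + μ.real t := measureReal_union₀ ht hd
  have hcompl : 1 - μ.real s / μ.real (s ∪ t) = μ.real t / μ.real (s ∪ t) := by
    field_simp
    linarith
  rw [hcompl, average_union hd ht (measure_ne_top μ s) (measure_ne_top μ t)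
    (hf.mono_set Set.subset_union_left) (hf.mono_set Set.subset_union_right), ← hsum]
  simp only [smul_eq_mul]

end MeasureTheory

theorem stmt_16_general
    {Ω : Type*} [MeasurableSpace Ω] (μ : Measure Ω) [IsProbabilityMeasure μ]
    (Y1 Y0 : Ω → ℝ) (hY1meas : Measurable Y1) (hY0meas : Measurable Y0)
    (hY1nonneg : ∀ ω, 0 ≤ Y1 ω) (hY0nonneg : ∀ ω, 0 ≤ Y0 ω)
    (hY1int : Integrable Y1 μ)
    -- monotonicity: P(Y(1)=0, Y(0)>0) = 0
    (hmono : μ {ω | Y1 ω = 0 ∧ 0 < Y0 ω} = 0)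
    (hpos1 : 0 < μ {ω | 0 < Y1 ω})
    (θ : ℝ)
    (hθ : θ = (μ {ω | 0 < Y0 ω}).toReal / (μ {ω | 0 < Y1 ω}).toReal) :
    (∫ ω in {ω | 0 < Y1 ω}, Y1 ω ∂μ) / (μ {ω | 0 < Y1 ω}).toReal
      = θ * ((∫ ω in {ω | 0 < Y1 ω ∧ 0 < Y0 ω}, Y1 ω ∂μ) /
              (μ {ω | 0 < Y1 ω ∧ 0 < Y0 ω}).toReal)
        + (1 - θ) * ((∫ ω in {ω | 0 < Y1 ω ∧ Y0 ω = 0}, Y1 ω ∂μ) /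
              (μ {ω | 0 < Y1 ω ∧ Y0 ω = 0}).toReal) := by
  have hsplit : {ω | 0 < Y1 ω} = {ω | 0 < Y1 ω ∧ 0 < Y0 ω} ∪ {ω | 0 < Y1 ω ∧ Y0 ω = 0} := by
    ext ω
    simp only [Set.mem_ofPred_eq, Set.mem_union, ← and_or_left, (hY0nonneg ω).lt_or_eq',
      and_true]
  have hY0pos : μ {ω | 0 < Y1 ω ∧ 0 < Y0 ω} = μ {ω | 0 < Y0 ω} := by
    refine measure_setOf_and_eq_of_null ?_
    simpa only [(hY1nonneg _).not_lt_iff_eq'] using hmono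
  have hdisj : Disjoint {ω | 0 < Y1 ω ∧ 0 < Y0 ω} {ω | 0 < Y1 ω ∧ Y0 ω = 0} :=
    Set.disjoint_left.mpr fun _ hA hC => hA.2.ne' hC.2
  have hCmeas : MeasurableSet {ω | 0 < Y1 ω ∧ Y0 ω = 0} :=
    (measurableSet_lt measurable_const hY1meas).inter (hY0meas (measurableSet_singleton 0))
  simp only [setIntegral_div_eq_setAverage]
  rw [hθ, ← hY0pos, hsplit]
  exact setAverage_union_eq_mixture hdisj.aedisjoint hCmeas.nullMeasurableSet
    hY1int.integrableOn (hsplit ▸ hpos1.ne')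

/-- Lee-bounds mixture identity: under monotonicity
`P(Y(1)=0, Y(0)>0) = 0`, with `θ = P(Y(0)>0)/P(Y(1)>0)`,
`E[Y(1) ∣ Y(1)>0] = θ·E[Y(1) ∣ Y(1)>0, Y(0)>0] + (1−θ)·E[Y(1) ∣ Y(1)>0, Y(0)=0]`. -/
theorem stmt_16
    {Ω : Type*} [MeasurableSpace Ω] (μ : Measure Ω) [IsProbabilityMeasure μ]
    (Y1 Y0 : Ω → ℝ) (hY1meas : Measurable Y1) (hY0meas : Measurable Y0)
    (hY1nonneg : ∀ ω, 0 ≤ Y1 ω) (hY0nonneg : ∀ ω, 0 ≤ Y0 ω)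
    (hY1int : Integrable Y1 μ)
    -- monotonicity: P(Y(1)=0, Y(0)>0) = 0
    (hmono : μ {ω | Y1 ω = 0 ∧ 0 < Y0 ω} = 0)
    (hpos1 : 0 < μ {ω | 0 < Y1 ω})
    (hposAT : 0 < μ {ω | 0 < Y1 ω ∧ 0 < Y0 ω})
    (θ : ℝ)
    (hθ : θ = (μ {ω | 0 < Y0 ω}).toReal / (μ {ω | 0 < Y1 ω}).toReal) :
    (∫ ω in {ω | 0 < Y1 ω}, Y1 ω ∂μ) / (μ {ω | 0 < Y1 ω}).toReal
      = θ * ((∫ ω in {ω | 0 < Y1 ω ∧ 0 < Y0 ω}, Y1 ω ∂μ) /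
              (μ {ω | 0 < Y1 ω ∧ 0 < Y0 ω}).toReal)
        + (1 - θ) * ((∫ ω in {ω | 0 < Y1 ω ∧ Y0 ω = 0}, Y1 ω ∂μ) /
              (μ {ω | 0 < Y1 ω ∧ Y0 ω = 0}).toReal) :=
  stmt_16_general μ Y1 Y0 hY1meas hY0meas hY1nonneg hY0nonneg hY1int hmono hpos1 θ hθ
end

section
/- Let (Y(1),Y(0)) be integrable potential outcomes in [0,∞)² satisfying the monotonicity condition P(Y(1)=0, Y(0)>0) = 0, with P(Y(1)>0, Y(0)>0) > 0 and P(Y(1)>0, Y(0)=0) > 0. Let α = P(Y(0)=0 | Y(1)>0) and define τ_b = E[Y(1) | Y(1)>0] − E[Y(0) | Y(0)>0]. Then τ_b = E[Y(1) − Y(0) | Y(1)>0, Y(0)>0] + α·(E[Y(1) | Y(1)>0, Y(0)=0] − E[Y(1) | Y(1)>0, Y(0)>0]). -/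
open MeasureTheory

/-- two-part-model decomposition: under monotonicity
`P(Y(1)=0, Y(0)>0) = 0`, with `α = P(Y(0)=0 ∣ Y(1)>0)`, the second-part marginal
effect `τ_b = E[Y(1) ∣ Y(1)>0] − E[Y(0) ∣ Y(0)>0]` decomposes as the intensive-margin
effect `E[Y(1)−Y(0) ∣ Y(1)>0, Y(0)>0]` plus the selection term
`α·(E[Y(1) ∣ Y(1)>0, Y(0)=0] − E[Y(1) ∣ Y(1)>0, Y(0)>0])`. -/
theorem stmt_17
    {Ω : Type*} [MeasurableSpace Ω] (μ : Measure Ω) [IsProbabilityMeasure μ]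
    (Y1 Y0 : Ω → ℝ) (hY1meas : Measurable Y1) (hY0meas : Measurable Y0)
    (hY1nonneg : ∀ ω, 0 ≤ Y1 ω) (hY0nonneg : ∀ ω, 0 ≤ Y0 ω)
    (hY1int : Integrable Y1 μ) (hY0int : Integrable Y0 μ)
    -- monotonicity: P(Y(1)=0, Y(0)>0) = 0
    (hmono : μ {ω | Y1 ω = 0 ∧ 0 < Y0 ω} = 0)
    (hposAT : 0 < μ {ω | 0 < Y1 ω ∧ 0 < Y0 ω})
    (hposC : 0 < μ {ω | 0 < Y1 ω ∧ Y0 ω = 0})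
    (α : ℝ)
    (hα : α = (μ {ω | 0 < Y1 ω ∧ Y0 ω = 0}).toReal / (μ {ω | 0 < Y1 ω}).toReal)
    (τb : ℝ)
    (hτb : τb = (∫ ω in {ω | 0 < Y1 ω}, Y1 ω ∂μ) / (μ {ω | 0 < Y1 ω}).toReal
              - (∫ ω in {ω | 0 < Y0 ω}, Y0 ω ∂μ) / (μ {ω | 0 < Y0 ω}).toReal) :
    τb = (∫ ω in {ω | 0 < Y1 ω ∧ 0 < Y0 ω}, (Y1 ω - Y0 ω) ∂μ) /
            (μ {ω | 0 < Y1 ω ∧ 0 < Y0 ω}).toReal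
       + α * ((∫ ω in {ω | 0 < Y1 ω ∧ Y0 ω = 0}, Y1 ω ∂μ) /
                (μ {ω | 0 < Y1 ω ∧ Y0 ω = 0}).toReal
            - (∫ ω in {ω | 0 < Y1 ω ∧ 0 < Y0 ω}, Y1 ω ∂μ) /
                (μ {ω | 0 < Y1 ω ∧ 0 < Y0 ω}).toReal) := by
  set AT : Set Ω := {ω | 0 < Y1 ω ∧ 0 < Y0 ω} with hATdef
  set C : Set Ω := {ω | 0 < Y1 ω ∧ Y0 ω = 0} with hCdef
  set A : Set Ω := {ω | 0 < Y1 ω} with hAdef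
  set B : Set Ω := {ω | 0 < Y0 ω} with hBdef
  have hATm : MeasurableSet AT :=
    (measurableSet_lt measurable_const hY1meas).inter
      (measurableSet_lt measurable_const hY0meas)
  have hCm : MeasurableSet C :=
    (measurableSet_lt measurable_const hY1meas).inter
      (hY0meas (measurableSet_singleton 0))
  have hAm : MeasurableSet A := measurableSet_lt measurable_const hY1meas
  have hBm : MeasurableSet B := measurableSet_lt measurable_const hY0meas
  -- A = AT ∪ C, disjoint
  have hAeq : A = AT ∪ C := by
    ext ω
    simp only [hAdef, hATdef, hCdef, Set.mem_setOf_eq, Set.mem_union]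
    constructor
    · intro h
      rcases (hY0nonneg ω).lt_or_eq with h0 | h0
      · exact Or.inl ⟨h, h0⟩
      · exact Or.inr ⟨h, h0.symm⟩
    · rintro (⟨h, _⟩ | ⟨h, _⟩) <;> exact h
  have hdisj : Disjoint AT C := by
    rw [Set.disjoint_left]
    rintro ω ⟨_, h0⟩ ⟨_, h0'⟩
    exact h0.ne' h0'
  -- B =ᵐ AT
  have hBae : B =ᵐ[μ] AT := by
    rw [MeasureTheory.ae_eq_set]
    constructor
    · refine measure_mono_null ?_ hmono
      rintro ω ⟨hB, hAT⟩
      simp only [hATdef, Set.mem_setOf_eq, not_and] at hAT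
      refine ⟨?_, hB⟩
      rcases (hY1nonneg ω).lt_or_eq with h | h
      · exact absurd hB (hAT h)
      · exact h.symm
    · have : AT \ B = ∅ := by
        ext ω; simp only [Set.mem_diff, Set.mem_empty_iff_false, iff_false]
        rintro ⟨⟨_, h⟩, hB⟩; exact hB h
      simp [this]
  have hμB : μ B = μ AT := measure_congr hBae
  have hintB : ∫ ω in B, Y0 ω ∂μ = ∫ ω in AT, Y0 ω ∂μ :=
    setIntegral_congr_set hBae
  -- measure additivity
  have hμA : μ A = μ AT + μ C := by
    rw [hAeq, measure_union hdisj hCm]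
  -- integral additivity
  have hintA : ∫ ω in A, Y1 ω ∂μ
      = (∫ ω in AT, Y1 ω ∂μ) + ∫ ω in C, Y1 ω ∂μ := by
    rw [hAeq, setIntegral_union hdisj hCm hY1int.integrableOn hY1int.integrableOn]
  -- integral of difference on AT
  have hintdiff : ∫ ω in AT, (Y1 ω - Y0 ω) ∂μ
      = (∫ ω in AT, Y1 ω ∂μ) - ∫ ω in AT, Y0 ω ∂μ :=
    integral_sub hY1int.integrableOn hY0int.integrableOn
  -- real-valued measures
  have hATfin : μ AT ≠ ⊤ := measure_ne_top μ AT
  have hCfin : μ C ≠ ⊤ := measure_ne_top μ C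
  have hpAT : 0 < (μ AT).toReal := ENNReal.toReal_pos hposAT.ne' hATfin
  have hpC : 0 < (μ C).toReal := ENNReal.toReal_pos hposC.ne' hCfin
  have hμAreal : (μ A).toReal = (μ AT).toReal + (μ C).toReal := by
    rw [hμA, ENNReal.toReal_add hATfin hCfin]
  have hpA : 0 < (μ A).toReal := by rw [hμAreal]; positivity
  rw [hτb, hα, hintdiff, hμB, hintB, hintA, hμAreal]
  field_simp
  ring
end
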